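/- Let W, V_1, ..., V_n be a Nica-covariant isometric representation of the odometer semigroup O_n (so W* V_1 = V_n W*). Then V_1* W^n = W V_1*. -/

import Mathlib

/-!
In the star monoid of bounded operators write `w = W`, `a = V_1`, `b = V_n`. Iterating
`W V_k = V_{k+1}` gives `W^(n-1) V_1 = V_n`, so `V_n* W^(n-1) = V_1* (W^(n-1))* W^(n-1) = V_1*`
because powers of an isometry are isometries. The adjoint of Nica covariance is
`V_1* W = W V_n*`, and therefore `V_1* W^n = W V_n* W^(n-1) = W V_1*`.
-/

open ContinuousLinearMap

section StarMonoid

variable {R : Type*} [Monoid R] [StarMul R]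

theorem star_pow_mul_pow_self {w : R} (hw : star w * w = 1) (m : ℕ) :
    star (w ^ m) * w ^ m = 1 := by
  rw [star_pow]
  exact pow_mul_pow_eq_one m hw

theorem star_mul_pow_eq_star_of_pow_mul_eq {w a b : R} (hw : star w * w = 1) {m : ℕ}
    (hpow : w ^ m * a = b) : star b * w ^ m = star a := by
  rw [← hpow, star_mul, mul_assoc, star_pow_mul_pow_self hw, mul_one]

theorem star_mul_pow_succ_eq_mul_star {w a b : R} (hw : star w * w = 1) {m : ℕ}
    (hpow : w ^ m * a = b) (hnica : star w * a = b * star w) :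
    star a * w ^ (m + 1) = w * star a := by
  have hnica_star : star a * w = w * star b := by
    simpa only [star_mul, star_star] using congrArg star hnica
  rw [pow_succ', ← mul_assoc, hnica_star, mul_assoc, star_mul_pow_eq_star_of_pow_mul_eq hw hpow]

end StarMonoid

theorem pow_mul_eq_of_mul_eq_succ {M : Type*} [Monoid M] {n : ℕ} (w : M) (v : Fin n → M)
    (hn : 0 < n) (hstep : ∀ i : Fin n, ∀ h : (i : ℕ) + 1 < n, w * v i = v ⟨(i : ℕ) + 1, h⟩) :
    ∀ (k : ℕ) (hk : k < n), w ^ k * v ⟨0, hn⟩ = v ⟨k, hk⟩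
  | 0, _ => by rw [pow_zero, one_mul]
  | k + 1, hk => by
    rw [pow_succ', mul_assoc, pow_mul_eq_of_mul_eq_succ w v hn hstep k (by omega)]
    exact hstep ⟨k, by omega⟩ hk

/-- `V ⟨k, _⟩` is the paper's `V_{k+1}`. -/
theorem stmt_9 {H : Type*} [NormedAddCommGroup H] [InnerProductSpace ℂ H] [CompleteSpace H]
    (n : ℕ) (hn : 0 < n) (W : H →L[ℂ] H) (V : Fin n → H →L[ℂ] H)
    (hWiso : adjoint W ∘L W = 1)
    (hWV : ∀ i : Fin n, ∀ h : (i : ℕ) + 1 < n, W ∘L V i = V ⟨(i : ℕ) + 1, h⟩)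
    (hNC : adjoint W ∘L V ⟨0, hn⟩ = V ⟨n - 1, by omega⟩ ∘L adjoint W) :
    adjoint (V ⟨0, hn⟩) ∘L W ^ n = W ∘L adjoint (V ⟨0, hn⟩) := by
  simp only [← star_eq_adjoint, ← mul_def] at hWiso hWV hNC ⊢
  have hpow := pow_mul_eq_of_mul_eq_succ W V hn hWV (n - 1) (by omega)
  have key := star_mul_pow_succ_eq_mul_star hWiso hpow hNC
  rwa [Nat.sub_add_cancel hn] at key
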